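/- For λ > −1, t ∈ ℝ and integer m ≥ 2, let P_n(x;λ) denote the monic orthogonal polynomials of the generalised higher order Freud weight ω(x;t,λ) and β_n(λ) their recurrence coefficients. Then for every n ≥ 1: (i) P_{2n+1}(x;λ) = P_{2n+1}(x;λ+1) + β_{2n}(λ+1) P_{2n−1}(x;λ+1), and (ii) P_{2n}(x;λ) = P_{2n}(x;λ+1) − ( β_{2n}(λ) β_{2n−1}(λ+1) P_{2n−1}′(0;λ) / P_{2n+1}′(0;λ) ) P_{2n−2}(x;λ+1). -/

import Mathlib

/-!
For an even weight `w`, let `R` be the monic orthogonal polynomials of `x² w`. Then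
`x R_{2n}(x)` is monic of degree `2n + 1` and `w`-orthogonal to every `q` of lower degree:
writing `q = x q̃ + q(0)`, the first part is the `x² w`-orthogonality of `R_{2n}` to `q̃`, and the
second is the integral of an odd function. By uniqueness, `P_{2n+1}(x;λ) = x P_{2n}(x;λ+1)`.
Relation (i) is then the recurrence at `λ + 1`, and (ii) is the recurrence at `λ` divided by `x`;
its coefficient is `-β_{2n}(λ)`, because `P_{2n±1}′(0;λ) = P_{2n±1-1}(0;λ+1)` and the recurrence at
`λ + 1` evaluated at `0` gives `P_{2n}(0;λ+1) = -β_{2n-1}(λ+1) P_{2n-2}(0;λ+1)`.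
-/

open MeasureTheory Real Polynomial

/-- The generalised higher order Freud weight `ω(x;t,λ) = |x|^{2λ+1} exp(t x² − x^{2m})`. -/
noncomputable def freudWeight (m : ℕ) (lam t x : ℝ) : ℝ :=
  |x| ^ (2 * lam + 1) * Real.exp (t * x ^ 2 - x ^ (2 * m))

open Set

lemma freudWeight_nonneg (m : ℕ) (lam t x : ℝ) : 0 ≤ freudWeight m lam t x := by
  unfold freudWeight; positivity

lemma freudWeight_pos (m : ℕ) (lam t : ℝ) {x : ℝ} (hx : x ≠ 0) : 0 < freudWeight m lam t x :=
  mul_pos (rpow_pos_of_pos (abs_pos.2 hx) _) (exp_pos _)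

lemma freudWeight_add_one (m : ℕ) {lam : ℝ} (hlam : 2 * lam + 3 ≠ 0) (t x : ℝ) :
    freudWeight m (lam + 1) t x = x ^ 2 * freudWeight m lam t x := by
  unfold freudWeight
  rcases eq_or_ne x 0 with rfl | hx
  · rw [abs_zero, zero_rpow (by rwa [show 2 * (lam + 1) + 1 = 2 * lam + 3 by ring])]
    ring
  · rw [show 2 * (lam + 1) + 1 = 2 * lam + 1 + (2 : ℕ) by push_cast; ring,
      rpow_add (abs_pos.2 hx), rpow_natCast, sq_abs]
    ring

@[fun_prop]
lemma measurable_freudWeight (m : ℕ) (lam t : ℝ) : Measurable (freudWeight m lam t) := by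
  unfold freudWeight; fun_prop

lemma freudWeight_neg (m : ℕ) (lam t x : ℝ) : freudWeight m lam t (-x) = freudWeight m lam t x := by
  simp [freudWeight, (even_two_mul m).neg_pow]

lemma sq_sub_one_le_pow {u : ℝ} (hu : 0 ≤ u) {m : ℕ} (hm : 2 ≤ m) : u ^ 2 - 1 ≤ u ^ m := by
  rcases le_total u 1 with h | h
  · nlinarith [pow_nonneg hu m, pow_le_one₀ hu h (n := 2)]
  · linarith [pow_le_pow_right₀ h hm]

lemma exp_mul_sq_sub_pow_le {m : ℕ} (hm : 2 ≤ m) (t x : ℝ) :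
    exp (t * x ^ 2 - x ^ (2 * m)) ≤ exp ((t + 1) ^ 2 / 4 + 1) * exp (-1 * x ^ 2) := by
  rw [← exp_add, exp_le_exp, pow_mul]
  nlinarith [sq_sub_one_le_pow (sq_nonneg x) hm, sq_nonneg (x ^ 2 - (t + 1) / 2)]

lemma integrable_abs_rpow_mul_exp_neg_sq {s : ℝ} (hs : -1 < s) :
    Integrable fun x : ℝ => |x| ^ s * exp (-1 * x ^ 2) := by
  have hIoi : IntegrableOn (fun x : ℝ => |x| ^ s * exp (-1 * x ^ 2)) (Ioi 0) :=
    (integrableOn_rpow_mul_exp_neg_mul_sq one_pos hs).congr_fun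
      (fun x hx => by simp only [abs_of_pos (mem_Ioi.1 hx)]) measurableSet_Ioi
  rw [← integrableOn_univ, ← Iio_union_Ici (a := (0 : ℝ)), integrableOn_union,
    integrableOn_Ici_iff_integrableOn_Ioi]
  refine ⟨?_, hIoi⟩
  rw [← (Measure.measurePreserving_neg volume).integrableOn_comp_preimage
    (Homeomorph.neg ℝ).measurableEmbedding]
  simpa only [Function.comp_def, abs_neg, neg_sq, neg_preimage, neg_Iio, neg_zero] using hIoi

lemma integrable_abs_rpow_mul_exp_mul_sq_sub_pow {m : ℕ} (hm : 2 ≤ m) (t : ℝ) {s : ℝ}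
    (hs : -1 < s) : Integrable fun x : ℝ => |x| ^ s * exp (t * x ^ 2 - x ^ (2 * m)) := by
  refine ((integrable_abs_rpow_mul_exp_neg_sq hs).const_mul (exp ((t + 1) ^ 2 / 4 + 1))).mono'
    (by fun_prop) (ae_of_all _ fun x => ?_)
  rw [norm_of_nonneg (by positivity), mul_left_comm]
  exact mul_le_mul_of_nonneg_left (exp_mul_sq_sub_pow_le hm t x) (by positivity)

lemma integrable_pow_mul_freudWeight {m : ℕ} (hm : 2 ≤ m) {lam : ℝ} (hlam : -1 < lam) (t : ℝ)
    (n : ℕ) : Integrable fun x => x ^ n * freudWeight m lam t x := by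
  refine (integrable_abs_rpow_mul_exp_mul_sq_sub_pow hm t (s := 2 * lam + 1 + n)
    (by linarith [n.cast_nonneg (α := ℝ)])).mono' (by fun_prop) ?_
  filter_upwards [Measure.ae_ne volume 0] with x hx
  rw [rpow_add (abs_pos.2 hx), rpow_natCast, norm_mul, norm_pow, norm_eq_abs,
    norm_of_nonneg (freudWeight_nonneg m lam t x), freudWeight]
  exact le_of_eq (by ring)

lemma integral_pos_of_ae_pos {α : Type*} [MeasurableSpace α] {μ : Measure α} [NeZero μ]
    {f : α → ℝ} (hf : Integrable f μ) (hpos : ∀ᵐ x ∂μ, 0 < f x) : 0 < ∫ x, f x ∂μ := by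
  rw [integral_pos_iff_support_of_nonneg_ae (hpos.mono fun x hx => hx.le) hf, pos_iff_ne_zero]
  intro h0
  obtain ⟨x, hx, hx0⟩ := (hpos.and (measure_eq_zero_iff_ae_notMem.1 h0)).exists
  exact hx0 hx.ne'

lemma integral_eq_zero_of_odd {f : ℝ → ℝ} (hf : ∀ x, f (-x) = -f x) : ∫ x, f x = 0 := by
  have h := integral_neg_eq_self f volume
  simp only [hf, integral_neg] at h
  linarith

lemma integrable_eval_mul_freudWeight {m : ℕ} (hm : 2 ≤ m) {lam : ℝ} (hlam : -1 < lam) (t : ℝ)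
    (p : ℝ[X]) : Integrable fun x => p.eval x * freudWeight m lam t x := by
  induction p using Polynomial.induction_on' with
  | add p q hp hq => simpa only [eval_add, add_mul, Pi.add_def] using hp.add hq
  | monomial n a =>
    simpa only [eval_monomial, mul_assoc] using
      (integrable_pow_mul_freudWeight hm hlam t n).const_mul a

lemma integral_eval_mul_self_mul_freudWeight_pos {m : ℕ} (hm : 2 ≤ m) {lam : ℝ} (hlam : -1 < lam)
    (t : ℝ) {q : ℝ[X]} (hq : q ≠ 0) :
    0 < ∫ x, q.eval x * q.eval x * freudWeight m lam t x := by
  refine integral_pos_of_ae_pos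
    (by simpa only [eval_mul] using integrable_eval_mul_freudWeight hm hlam t (q * q)) ?_
  filter_upwards [(finite_setOfPred_isRoot hq).countable.ae_notMem volume,
    Measure.ae_ne volume 0] with x hroot hx
  exact mul_pos (mul_self_pos.2 hroot) (freudWeight_pos m lam t hx)

section ThreeTermRecurrence

variable {Q : ℕ → ℝ[X]} {b : ℕ → ℝ}
  (hrec : ∀ n, 1 ≤ n → Q (n + 1) = X * Q n - C (b n) * Q (n - 1))

include hrec

lemma eval_zero_succ_of_recurrence {n : ℕ} (hn : 1 ≤ n) :
    (Q (n + 1)).eval 0 = -b n * (Q (n - 1)).eval 0 := by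
  simp [hrec n hn]

lemma eval_neg_of_recurrence (h0 : Q 0 = 1) (h1 : Q 1 = X) (n : ℕ) (x : ℝ) :
    (Q n).eval (-x) = (-1) ^ n * (Q n).eval x := by
  induction n using Nat.twoStepInduction with
  | zero => simp [h0]
  | one => simp [h1]
  | more n ih ih' =>
    rw [hrec (n + 1) (by omega)]
    simp only [eval_sub, eval_mul, eval_X, eval_C, Nat.add_sub_cancel, ih, ih', pow_succ]
    ring

lemma eval_zero_two_mul_ne_zero (h0 : Q 0 = 1) (hb : ∀ k, b (2 * k + 1) ≠ 0) (k : ℕ) :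
    (Q (2 * k)).eval 0 ≠ 0 := by
  induction k with
  | zero => simp [h0]
  | succ k ih =>
    rw [show 2 * (k + 1) = 2 * k + 1 + 1 by ring, eval_zero_succ_of_recurrence hrec (by omega)]
    exact mul_ne_zero (neg_ne_zero.2 (hb k)) ih

end ThreeTermRecurrence

lemma eval_zero_derivative_X_mul (p : ℝ[X]) : (derivative (X * p)).eval 0 = p.eval 0 := by
  simp [derivative_mul]

structure IsMonicOrthogonalSequence (w : ℝ → ℝ) (P : ℕ → ℝ[X]) : Prop where
  monic : ∀ n, (P n).Monic
  natDegree_eq : ∀ n, (P n).natDegree = n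
  orthogonal : ∀ j k, j ≠ k → ∫ x, (P j).eval x * (P k).eval x * w x = 0

namespace IsMonicOrthogonalSequence

variable {w : ℝ → ℝ} {P : ℕ → ℝ[X]} (hw : ∀ p : ℝ[X], Integrable fun x => p.eval x * w x)

include hw

lemma integrable_eval_mul_eval (p q : ℝ[X]) : Integrable fun x => p.eval x * q.eval x * w x := by
  simpa only [eval_mul] using hw (p * q)

lemma integral_eq_zero_of_degree_lt (hP : IsMonicOrthogonalSequence w P) {n : ℕ} {q : ℝ[X]}
    (hq : q.degree < n) : ∫ x, q.eval x * (P n).eval x * w x = 0 := by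
  suffices ∀ d ≤ n, ∀ q : ℝ[X], q.degree < d → ∫ x, q.eval x * (P n).eval x * w x = 0 from
    this n le_rfl q hq
  intro d
  induction d with
  | zero =>
    intro _ q hq
    have hq0 : q = 0 := by
      ext i
      simpa using (degree_lt_iff_coeff_zero q 0).1 hq i i.zero_le
    simp [hq0]
  | succ d ih =>
    intro hd q hq
    set r := q - C (q.coeff d) * P d
    have hr : r.degree < d := by
      rw [degree_lt_iff_coeff_zero] at hq ⊢
      intro i hi
      rcases hi.eq_or_lt with rfl | hi
      · have hlead : (P d).coeff d = 1 := by
          simpa [hP.natDegree_eq d] using (hP.monic d).coeff_natDegree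
        simp [r, hlead]
      · simp [r, hq i hi, coeff_eq_zero_of_natDegree_lt ((hP.natDegree_eq d).trans_lt hi)]
    have hsplit : ∀ x, q.eval x * (P n).eval x * w x =
        q.coeff d * ((P d).eval x * (P n).eval x * w x) + r.eval x * (P n).eval x * w x := by
      intro x
      simp only [r, eval_sub, eval_mul, eval_C]
      ring
    simp only [hsplit]
    rw [integral_add ((integrable_eval_mul_eval hw _ _).const_mul _)
      (integrable_eval_mul_eval hw _ _), integral_const_mul, hP.orthogonal d n (by omega),
      ih (by omega) r hr, mul_zero, add_zero]

lemma eq_of_orthogonal (hP : IsMonicOrthogonalSequence w P)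
    (hpos : ∀ q : ℝ[X], q ≠ 0 → 0 < ∫ x, q.eval x * q.eval x * w x) {n : ℕ} {Q : ℝ[X]}
    (hQ : Q.Monic) (hQn : Q.natDegree = n)
    (hQorth : ∀ q : ℝ[X], q.degree < n → ∫ x, q.eval x * Q.eval x * w x = 0) : P n = Q := by
  by_contra hne
  set D := P n - Q
  have hD : D.degree < n := by
    have hPn : (P n).degree = n :=
      (degree_eq_iff_natDegree_eq (hP.monic n).ne_zero).2 (hP.natDegree_eq n)
    have hQn' : Q.degree = n := (degree_eq_iff_natDegree_eq hQ.ne_zero).2 hQn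
    exact hPn ▸ degree_sub_lt_left (hPn.trans hQn'.symm) (hP.monic n).ne_zero
      (by rw [(hP.monic n).leadingCoeff, hQ.leadingCoeff])
  have hself : ∫ x, D.eval x * D.eval x * w x = 0 := by
    have hsplit : ∀ x, D.eval x * D.eval x * w x =
        D.eval x * (P n).eval x * w x - D.eval x * Q.eval x * w x := by
      intro x
      simp only [D, eval_sub]
      ring
    simp only [hsplit]
    rw [integral_sub (integrable_eval_mul_eval hw _ _) (integrable_eval_mul_eval hw _ _),
      hP.integral_eq_zero_of_degree_lt hw hD, hQorth D hD, sub_zero]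
  exact (hpos D (sub_ne_zero.2 hne)).ne' hself

lemma succ_eq_X_mul (hP : IsMonicOrthogonalSequence w P)
    (hpos : ∀ q : ℝ[X], q ≠ 0 → 0 < ∫ x, q.eval x * q.eval x * w x) (hw_even : ∀ x, w (-x) = w x)
    {R : ℕ → ℝ[X]} (hR : IsMonicOrthogonalSequence (fun x => x ^ 2 * w x) R) {k : ℕ}
    (hRk : ∀ x, (R k).eval (-x) = (R k).eval x) : P (k + 1) = X * R k := by
  refine hP.eq_of_orthogonal hw hpos (monic_X.mul (hR.monic k)) ?_ fun q hq => ?_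
  · rw [natDegree_mul X_ne_zero (hR.monic k).ne_zero, natDegree_X, hR.natDegree_eq, add_comm]
  have hdivX : q.divX.degree < k := by
    rw [degree_lt_iff_coeff_zero] at hq ⊢
    intro i hi
    rw [coeff_divX, hq (i + 1) (by exact_mod_cast Nat.succ_le_succ hi)]
  have hsplit : ∀ x, q.eval x * (X * R k).eval x * w x =
      q.divX.eval x * (R k).eval x * (x ^ 2 * w x) + q.coeff 0 * (x * (R k).eval x * w x) := by
    intro x
    conv_lhs => rw [← X_mul_divX_add q]
    simp only [eval_add, eval_mul, eval_X, eval_C]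
    ring
  have hw₂ (p : ℝ[X]) : Integrable fun x => p.eval x * (x ^ 2 * w x) :=
    (hw (p * X ^ 2)).congr (ae_of_all _ fun x => by simp only [eval_mul, eval_pow, eval_X]; ring)
  have hodd : Integrable fun x => x * (R k).eval x * w x := by
    simpa only [eval_X] using integrable_eval_mul_eval hw X (R k)
  simp only [hsplit]
  rw [integral_add (integrable_eval_mul_eval hw₂ _ _) (hodd.const_mul _),
    integral_const_mul, hR.integral_eq_zero_of_degree_lt hw₂ hdivX,
    integral_eq_zero_of_odd fun x => by rw [hRk, hw_even]; ring, mul_zero, add_zero]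

end IsMonicOrthogonalSequence

lemma connection_of_odd_eq_X_mul {P R : ℕ → ℝ[X]} {b c : ℕ → ℝ}
    (hPrec : ∀ n, 1 ≤ n → P (n + 1) = X * P n - C (b n) * P (n - 1))
    (hRrec : ∀ n, 1 ≤ n → R (n + 1) = X * R n - C (c n) * R (n - 1))
    (hodd : ∀ j, P (2 * j + 1) = X * R (2 * j)) {n : ℕ} (hn : 1 ≤ n)
    (hc : c (2 * n - 1) ≠ 0) (hR : (R (2 * n - 2)).eval 0 ≠ 0) :
    P (2 * n + 1) = R (2 * n + 1) + C (c (2 * n)) * R (2 * n - 1) ∧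
      P (2 * n) = R (2 * n) - C (b (2 * n) * c (2 * n - 1) * (derivative (P (2 * n - 1))).eval 0 /
        (derivative (P (2 * n + 1))).eval 0) * R (2 * n - 2) := by
  have hodd' : P (2 * n - 1) = X * R (2 * n - 2) := by
    rw [show 2 * n - 1 = 2 * (n - 1) + 1 by omega, show 2 * n - 2 = 2 * (n - 1) by omega]
    exact hodd (n - 1)
  refine ⟨by rw [hodd, hRrec _ (by omega)]; ring, ?_⟩
  have hR_even : R (2 * n) = P (2 * n) - C (b (2 * n)) * R (2 * n - 2) := by
    refine mul_left_cancel₀ X_ne_zero ?_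
    rw [← hodd, hPrec _ (by omega), hodd']
    ring
  have hR_zero : (R (2 * n)).eval 0 = -c (2 * n - 1) * (R (2 * n - 2)).eval 0 := by
    simpa only [show 2 * n - 1 + 1 = 2 * n by omega, show 2 * n - 1 - 1 = 2 * n - 2 by omega]
      using eval_zero_succ_of_recurrence hRrec (n := 2 * n - 1) (by omega)
  have hcoeff : b (2 * n) * c (2 * n - 1) * (derivative (P (2 * n - 1))).eval 0 /
      (derivative (P (2 * n + 1))).eval 0 = -b (2 * n) := by
    rw [hodd, hodd', eval_zero_derivative_X_mul, eval_zero_derivative_X_mul, hR_zero]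
    field_simp
  rw [hcoeff, hR_even, map_neg]
  ring

/-- For `λ > −1`, `t ∈ ℝ` and integer `m ≥ 2`, the monic orthogonal
polynomials of the generalised higher order Freud weight satisfy, for every `n ≥ 1`:
(i) `P_{2n+1}(x;λ) = P_{2n+1}(x;λ+1) + β_{2n}(λ+1) P_{2n−1}(x;λ+1)`, and
(ii) `P_{2n}(x;λ) = P_{2n}(x;λ+1)
      − (β_{2n}(λ) β_{2n−1}(λ+1) P_{2n−1}′(0;λ)/P_{2n+1}′(0;λ)) P_{2n−2}(x;λ+1)`. -/
theorem connection_relations (m : ℕ) (hm : 2 ≤ m) (t : ℝ)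
    (P : ℝ → ℕ → Polynomial ℝ) (β : ℝ → ℕ → ℝ)
    (hmonic : ∀ lam, -1 < lam → ∀ n, (P lam n).Monic)
    (hdeg : ∀ lam, -1 < lam → ∀ n, (P lam n).natDegree = n)
    (horth : ∀ lam, -1 < lam → ∀ j k, j ≠ k →
      ∫ x : ℝ, (P lam j).eval x * (P lam k).eval x * freudWeight m lam t x = 0)
    (hβpos : ∀ lam, -1 < lam → ∀ n, 1 ≤ n → 0 < β lam n)
    (hP0 : ∀ lam, -1 < lam → P lam 0 = 1) (hP1 : ∀ lam, -1 < lam → P lam 1 = X)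
    (hrec : ∀ lam, -1 < lam → ∀ n, 1 ≤ n →
      P lam (n + 1) = X * P lam n - C (β lam n) * P lam (n - 1)) :
    ∀ lam, -1 < lam → ∀ n : ℕ, 1 ≤ n →
      P lam (2 * n + 1) =
        P (lam + 1) (2 * n + 1) + C (β (lam + 1) (2 * n)) * P (lam + 1) (2 * n - 1) ∧
      P lam (2 * n) =
        P (lam + 1) (2 * n)
          - C (β lam (2 * n) * β (lam + 1) (2 * n - 1) *
              (derivative (P lam (2 * n - 1))).eval 0 /
                (derivative (P lam (2 * n + 1))).eval 0) * P (lam + 1) (2 * n - 2) := by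
  intro lam hlam n hn
  have hlam' : -1 < lam + 1 := by linarith
  have hP : IsMonicOrthogonalSequence (freudWeight m lam t) (P lam) :=
    ⟨hmonic lam hlam, hdeg lam hlam, horth lam hlam⟩
  have hR : IsMonicOrthogonalSequence (fun x => x ^ 2 * freudWeight m lam t x) (P (lam + 1)) := by
    rw [← funext (freudWeight_add_one m (by linarith : 2 * lam + 3 ≠ 0) t)]
    exact ⟨hmonic _ hlam', hdeg _ hlam', horth _ hlam'⟩
  have hodd (j : ℕ) : P lam (2 * j + 1) = X * P (lam + 1) (2 * j) :=
    hP.succ_eq_X_mul (integrable_eval_mul_freudWeight hm hlam t)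
      (fun _ => integral_eval_mul_self_mul_freudWeight_pos hm hlam t) (freudWeight_neg m lam t) hR
      fun x => by
        rw [eval_neg_of_recurrence (hrec _ hlam') (hP0 _ hlam') (hP1 _ hlam'),
          (even_two_mul j).neg_one_pow, one_mul]
  have hR_ne : (P (lam + 1) (2 * n - 2)).eval 0 ≠ 0 := by
    rw [show 2 * n - 2 = 2 * (n - 1) by omega]
    exact eval_zero_two_mul_ne_zero (hrec _ hlam') (hP0 _ hlam')
      (fun _ => (hβpos _ hlam' _ (by omega)).ne') (n - 1)
  exact connection_of_odd_eq_X_mul (hrec lam hlam) (hrec _ hlam') hodd hn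
    (hβpos _ hlam' _ (by omega)).ne' hR_ne
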